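/- Let (L, ∗, α) be a left Hom-Leibniz superalgebra, [x,y] := x∗y − (−1)^{|x||y|} y∗x the supercommutator, and {x,y,z} := −(x∗y)∗α(z). Then for all homogeneous x, y, z ∈ L: ↻_{(x,y,z)}(−1)^{|x||z|}( [[x,y],α(z)] + {x,y,z} ) = 0, where ↻_{(x,y,z)}(−1)^{|x||z|}F(x,y,z) denotes the graded cyclic sum (−1)^{|x||z|}F(x,y,z) + (−1)^{|y||x|}F(y,z,x) + (−1)^{|z||y|}F(z,x,y). -/

import Mathlib

/-!
Expanding the brackets, the summand `(−1)^{|x||z|}([[x,y],α(z)] + {x,y,z})` loses its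
`(x∗y)∗α(z)` terms against `{x,y,z}` and keeps three terms, one of shape `(y∗x)∗α(z)` and
two of shape `α(z)∗(_∗_)`. The nine terms of the cyclic sum are then exactly cancelled by the
three Leibniz identities for `(y,x,z)`, `(z,y,x)`, `(x,z,y)`, each multiplied by its own sign,
using only `(−1)^{(i+j)k} = (−1)^{ik}(−1)^{jk}` and `((−1)^{ij})² = 1`.
-/

/-- A (multiplicative) Hom-superalgebra: a `ℤ/2`-graded `K`-vector space `L = L₀ ⊕ L₁`
with a parity-respecting bilinear operation `op` and an even multiplicative linear map `map`. -/
structure HomSuperalgebra (K : Type*) [Field K] (L : Type*) [AddCommGroup L] [Module K L] where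
  grading : ZMod 2 → Submodule K L
  internal : DirectSum.IsInternal grading
  op : L →ₗ[K] L →ₗ[K] L
  op_mem : ∀ {i j : ZMod 2} {x y : L}, x ∈ grading i → y ∈ grading j → op x y ∈ grading (i + j)
  map : L →ₗ[K] L
  map_even : ∀ {i : ZMod 2} {x : L}, x ∈ grading i → map x ∈ grading i
  map_op : ∀ x y : L, map (op x y) = op (map x) (map y)

namespace HomSuperalgebra

variable {K : Type*} [Field K] {L : Type*} [AddCommGroup L] [Module K L]

/-- The sign `(−1)^{ij}` attached to parities `i, j`. -/
def sgn (K : Type*) [Field K] (i j : ZMod 2) : K := (-1 : K) ^ (i.val * j.val)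

/-- The supercommutator `[x,y] := x∗y − (−1)^{|x||y|} y∗x` of homogeneous elements
of parities `i` and `j`. -/
def br (A : HomSuperalgebra K L) (i j : ZMod 2) (x y : L) : L :=
  A.op x y - sgn K i j • A.op y x

/-- The Hom-associator `as_α(x,y,z) := (x∗y)∗α(z) − α(x)∗(y∗z)`. -/
def assoc (A : HomSuperalgebra K L) (x y z : L) : L :=
  A.op (A.op x y) (A.map z) - A.op (A.map x) (A.op y z)

/-- The ternary operation `{x,y,z} := −(x∗y)∗α(z)`. -/
def trip (A : HomSuperalgebra K L) (x y z : L) : L :=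
  -(A.op (A.op x y) (A.map z))

/-- The left Hom-Leibniz superidentity:
`α(x)∗(y∗z) = (x∗y)∗α(z) + (−1)^{|x||y|} α(y)∗(x∗z)` for homogeneous `x, y, z`. -/
def IsLeftLeibniz (A : HomSuperalgebra K L) : Prop :=
  ∀ (i j k : ZMod 2) (x y z : L),
    x ∈ A.grading i → y ∈ A.grading j → z ∈ A.grading k →
      A.op (A.map x) (A.op y z)
        = A.op (A.op x y) (A.map z) + sgn K i j • A.op (A.map y) (A.op x z)

end HomSuperalgebra

open HomSuperalgebra

variable {K : Type*} [Field K] {L : Type*} [AddCommGroup L] [Module K L]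

namespace HomSuperalgebra

variable (K)

theorem sgn_comm (i j : ZMod 2) : sgn K i j = sgn K j i := by
  rw [sgn, sgn, mul_comm]

theorem sgn_add_left (i j k : ZMod 2) : sgn K (i + j) k = sgn K i k * sgn K j k := by
  rw [sgn, sgn, sgn, ← pow_add, ← add_mul, ZMod.val_add, neg_one_pow_eq_pow_mod_two,
    Nat.mod_mul_mod, ← neg_one_pow_eq_pow_mod_two]

theorem sgn_mul_self (i j : ZMod 2) : sgn K i j * sgn K i j = 1 := by
  rw [sgn, ← mul_pow, neg_one_mul, neg_neg, one_pow]

variable {K}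

theorem sgn_smul_br_br_add_trip (A : HomSuperalgebra K L) (i j k : ZMod 2) (x y z : L) :
    sgn K i k • (A.br (i + j) k (A.br i j x y) (A.map z) + A.trip x y z)
      = -(sgn K i j * sgn K i k) • A.op (A.op y x) (A.map z)
        - sgn K j k • A.op (A.map z) (A.op x y) + (sgn K i j * sgn K j k) • A.op (A.map z) (A.op y x) := by
  simp only [br, trip, sgn_add_left, map_sub, map_smul, LinearMap.sub_apply, LinearMap.smul_apply]
  linear_combination (norm := module)
    sgn_mul_self K i k • ((sgn K i j * sgn K j k) • A.op (A.map z) (A.op y x)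
      - sgn K j k • A.op (A.map z) (A.op x y))

theorem IsLeftLeibniz.sgn_smul {A : HomSuperalgebra K L} (hL : A.IsLeftLeibniz)
    {i j k : ZMod 2} {x y z : L} (hx : x ∈ A.grading i) (hy : y ∈ A.grading j)
    (hz : z ∈ A.grading k) :
    sgn K i j • A.op (A.map x) (A.op y z)
      = sgn K i j • A.op (A.op x y) (A.map z) + A.op (A.map y) (A.op x z) := by
  rw [hL i j k x y z hx hy hz, smul_add, smul_smul, sgn_mul_self, one_smul]

end HomSuperalgebra

/-- SHLY5: in a left Hom-Leibniz superalgebra, the graded cyclic sum of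
`[[x,y],α(z)] + {x,y,z}` vanishes, where `{x,y,z} := −(x∗y)∗α(z)`. -/
theorem shly5 (A : HomSuperalgebra K L) (hL : A.IsLeftLeibniz)
    (i j k : ZMod 2) (x y z : L)
    (hx : x ∈ A.grading i) (hy : y ∈ A.grading j) (hz : z ∈ A.grading k) :
    sgn K i k • (A.br (i + j) k (A.br i j x y) (A.map z) + A.trip x y z)
      + sgn K j i • (A.br (j + k) i (A.br j k y z) (A.map x) + A.trip y z x)
      + sgn K k j • (A.br (k + i) j (A.br k i z x) (A.map y) + A.trip z x y) = 0 := by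
  have hyxz := hL.sgn_smul hy hx hz
  have hzyx := hL.sgn_smul hz hy hx
  have hxzy := hL.sgn_smul hx hz hy
  rw [sgn_smul_br_br_add_trip, sgn_smul_br_br_add_trip, sgn_smul_br_br_add_trip]
  rw [sgn_comm K j i, sgn_comm K k j, sgn_comm K k i] at *
  linear_combination (norm := module) sgn K i k • hyxz + sgn K i j • hzyx + sgn K j k • hxzy
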